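/- arXiv:2304.05000 — 2 statements merged into one kernel-verified Lean document; each statement's English description precedes it below -/
import Mathlib

section
/- Let R and Q be two left-symmetric conformal algebras and E = R ⊕ Q the direct sum of ℂ[∂]-modules. Suppose E carries a left-symmetric conformal algebra structure such that R and Q are both subalgebras of E (the restrictions of the λ-product of E to R and to Q coincide with the λ-products of R and Q respectively). Then there exists a left-symmetric conformal extending structure Ω(R,Q) = (φ, ψ, l, r, ∘_λ) of R by Q with g_λ(·,·) trivial and ∘_λ equal to the λ-product of Q, and an isomorphism of left-symmetric conformal algebras from E to the bicrossed product R⋈^{φ,ψ}_{l,r}Q which stabilizes R and co-stabilizes Q. -/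
open Finsupp Polynomial

noncomputable section

/-- One-variable conformal polynomials in λ with coefficients in `W`:
the coefficient of `λ^n` sits at index `n`. -/
abbrev OP (W : Type*) [Zero W] := ℕ →₀ W

/-- Two-variable conformal polynomials in λ, μ with coefficients in `W`. -/
abbrev TP (W : Type*) [Zero W] := (ℕ × ℕ) →₀ W

section Defs

variable {U V W L : Type*}
variable [AddCommGroup U] [Module ℂ U] [AddCommGroup V] [Module ℂ V]
variable [AddCommGroup W] [Module ℂ W] [AddCommGroup L] [Module ℂ L]

/-- Multiplication by the variable λ on one-variable polynomials. -/
def lsh : OP W →ₗ[ℂ] OP W := Finsupp.lmapDomain W ℂ (· + 1)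

/-- Multiplication by λ on two-variable polynomials. -/
def LX : TP W →ₗ[ℂ] TP W := Finsupp.lmapDomain W ℂ (fun p => (p.1 + 1, p.2))

/-- Multiplication by μ on two-variable polynomials. -/
def LY : TP W →ₗ[ℂ] TP W := Finsupp.lmapDomain W ℂ (fun p => (p.1, p.2 + 1))

/-- Coefficientwise action of ∂ on one-variable polynomials. -/
def pD (dW : W →ₗ[ℂ] W) : OP W →ₗ[ℂ] OP W := Finsupp.mapRange.linearMap dW

/-- Coefficientwise action of ∂ on two-variable polynomials. -/
def PD (dW : W →ₗ[ℂ] W) : TP W →ₗ[ℂ] TP W := Finsupp.mapRange.linearMap dW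

/-- The operator −λ−∂ on one-variable polynomials. -/
def nD (dW : W →ₗ[ℂ] W) : OP W →ₗ[ℂ] OP W := -lsh - pD dW

/-- The operator −λ−∂ on two-variable polynomials. -/
def nX (dW : W →ₗ[ℂ] W) : TP W →ₗ[ℂ] TP W := -LX - PD dW

/-- The operator −μ−∂ on two-variable polynomials. -/
def nY (dW : W →ₗ[ℂ] W) : TP W →ₗ[ℂ] TP W := -LY - PD dW

/-- The operator −λ−μ−∂ on two-variable polynomials. -/
def nXY (dW : W →ₗ[ℂ] W) : TP W →ₗ[ℂ] TP W := -LX - LY - PD dW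

/-- Substitution of a (commuting) operator `A` for the variable of a one-variable
polynomial, with values in two-variable polynomials. -/
def evA (A : TP W →ₗ[ℂ] TP W) : OP W →ₗ[ℂ] TP W :=
  Finsupp.lsum ℂ (fun k => (A ^ k) ∘ₗ Finsupp.lsingle ((0, 0) : ℕ × ℕ))

/-- Substitution of an operator `A` for the variable of a one-variable polynomial. -/
def evA1 (A : OP W →ₗ[ℂ] OP W) : OP W →ₗ[ℂ] OP W :=
  Finsupp.lsum ℂ (fun k => (A ^ k) ∘ₗ Finsupp.lsingle (0 : ℕ))

/-- `u_A v`: the pairing `m` evaluated with the variable replaced by the operator `A`. -/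
def ev2 (m : U →ₗ[ℂ] V →ₗ[ℂ] OP W) (A : TP W →ₗ[ℂ] TP W) (u : U) (v : V) : TP W :=
  evA A (m u v)

/-- Extension of the pairing `m`, in its first argument, to two-variable polynomials. -/
def exL (m : U →ₗ[ℂ] V →ₗ[ℂ] OP W) (A : TP W →ₗ[ℂ] TP W) (p : TP U) (v : V) : TP W :=
  Finsupp.sum p fun ij u => (LX ^ ij.1) ((LY ^ ij.2) (evA A (m u v)))

/-- Extension of the pairing `m`, in its second argument, to two-variable polynomials. -/
def exR (m : U →ₗ[ℂ] V →ₗ[ℂ] OP W) (A : TP W →ₗ[ℂ] TP W) (u : U) (p : TP V) : TP W :=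
  Finsupp.sum p fun ij v => (LX ^ ij.1) ((LY ^ ij.2) (evA A (m u v)))

/-- Extension of a unary conformal-linear map to two-variable polynomials. -/
def exU (D : U →ₗ[ℂ] OP W) (A : TP W →ₗ[ℂ] TP W) (p : TP U) : TP W :=
  Finsupp.sum p fun ij u => (LX ^ ij.1) ((LY ^ ij.2) (evA A (D u)))

/-- Coefficientwise application of a linear map to a one-variable polynomial. -/
def pMap (f : U →ₗ[ℂ] W) : OP U →ₗ[ℂ] OP W := Finsupp.mapRange.linearMap f

/-- A conformal bilinear map: `f(∂u, v) = −λ f(u,v)` and `f(u, ∂v) = (λ+∂) f(u,v)`. -/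
structure ConfBilin (dU : U →ₗ[ℂ] U) (dV : V →ₗ[ℂ] V) (dW : W →ₗ[ℂ] W)
    (m : U →ₗ[ℂ] V →ₗ[ℂ] OP W) : Prop where
  dleft : ∀ u v, m (dU u) v = -lsh (m u v)
  dright : ∀ u v, m u (dV v) = lsh (m u v) + pD dW (m u v)

/-- A left-symmetric conformal algebra structure on the ℂ[∂]-module `(L, dL)`. -/
structure IsLSCA (dL : L →ₗ[ℂ] L) (m : L →ₗ[ℂ] L →ₗ[ℂ] OP L) : Prop where
  conf : ConfBilin dL dL dL m
  lsym : ∀ a b c : L,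
    exL m (LX + LY) (ev2 m LX a b) c - exR m LX a (ev2 m LY b c)
      = exL m (LX + LY) (ev2 m LY b a) c - exR m LY b (ev2 m LX a c)

/-- The commutator λ-bracket `[u_λ v] = u_λ v − v_{−λ−∂} u`. -/
def commut (dL : L →ₗ[ℂ] L) (m : L →ₗ[ℂ] L →ₗ[ℂ] OP L) : L →ₗ[ℂ] L →ₗ[ℂ] OP L :=
  m - (m.compr₂ (evA1 (nD dL))).flip

/-- A Lie conformal algebra structure on the ℂ[∂]-module `(L, dL)`. -/
structure IsLieCA (dL : L →ₗ[ℂ] L) (br : L →ₗ[ℂ] L →ₗ[ℂ] OP L) : Prop where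
  dleft : ∀ u v, br (dL u) v = -lsh (br u v)
  dright : ∀ u v, br u (dL v) = lsh (br u v) + pD dL (br u v)
  skew : ∀ u v, br u v = -evA1 (nD dL) (br v u)
  jacobi : ∀ a b c : L,
    exR br LX a (ev2 br LY b c)
      = exL br (LX + LY) (ev2 br LX a b) c + exR br LY b (ev2 br LX a c)

end Defs

section Ext

variable {R Q : Type*} [AddCommGroup R] [Module ℂ R] [AddCommGroup Q] [Module ℂ Q]

/-- An extending datum of a left-symmetric conformal algebra `R` by a ℂ[∂]-module `Q`. -/
structure ExtDatum (dR : R →ₗ[ℂ] R) (dQ : Q →ₗ[ℂ] Q) where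
  phi : Q →ₗ[ℂ] R →ₗ[ℂ] OP R
  psi : Q →ₗ[ℂ] R →ₗ[ℂ] OP R
  l : R →ₗ[ℂ] Q →ₗ[ℂ] OP Q
  r : R →ₗ[ℂ] Q →ₗ[ℂ] OP Q
  g : Q →ₗ[ℂ] Q →ₗ[ℂ] OP R
  o : Q →ₗ[ℂ] Q →ₗ[ℂ] OP Q
  hphi : ConfBilin dQ dR dR phi
  hpsi : ConfBilin dQ dR dR psi
  hl : ConfBilin dR dQ dQ l
  hr : ConfBilin dR dQ dQ r
  hg : ConfBilin dQ dQ dR g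
  ho : ConfBilin dQ dQ dQ o

/-- Embedding of `R`-valued polynomials into `(R ⊕ Q)`-valued polynomials. -/
def inlP (R Q : Type*) [AddCommGroup R] [Module ℂ R] [AddCommGroup Q] [Module ℂ Q] :
    OP R →ₗ[ℂ] OP (R × Q) := Finsupp.mapRange.linearMap (LinearMap.inl ℂ R Q)

/-- Embedding of `Q`-valued polynomials into `(R ⊕ Q)`-valued polynomials. -/
def inrP (R Q : Type*) [AddCommGroup R] [Module ℂ R] [AddCommGroup Q] [Module ℂ Q] :
    OP Q →ₗ[ℂ] OP (R × Q) := Finsupp.mapRange.linearMap (LinearMap.inr ℂ R Q)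

/-- The λ-product of the unified product `R ♮ Q`:
`(a+x) _λ (b+y) = (a_λ b + φ(x)_λ b + ψ(y)_{−λ−∂} a + g_λ(x,y)) + (x∘_λ y + l(a)_λ y + r(b)_{−λ−∂} x)`. -/
def uprod (dR : R →ₗ[ℂ] R) (dQ : Q →ₗ[ℂ] Q) (Ω : ExtDatum dR dQ)
    (m : R →ₗ[ℂ] R →ₗ[ℂ] OP R) :
    (R × Q) →ₗ[ℂ] (R × Q) →ₗ[ℂ] OP (R × Q) :=
  ((m.compl₁₂ (LinearMap.fst ℂ R Q) (LinearMap.fst ℂ R Q)).compr₂ (inlP R Q))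
    + ((Ω.phi.compl₁₂ (LinearMap.snd ℂ R Q) (LinearMap.fst ℂ R Q)).compr₂ (inlP R Q))
    + (((Ω.psi.compl₁₂ (LinearMap.snd ℂ R Q) (LinearMap.fst ℂ R Q)).compr₂
        (inlP R Q ∘ₗ evA1 (nD dR))).flip)
    + ((Ω.g.compl₁₂ (LinearMap.snd ℂ R Q) (LinearMap.snd ℂ R Q)).compr₂ (inlP R Q))
    + ((Ω.o.compl₁₂ (LinearMap.snd ℂ R Q) (LinearMap.snd ℂ R Q)).compr₂ (inrP R Q))
    + ((Ω.l.compl₁₂ (LinearMap.fst ℂ R Q) (LinearMap.snd ℂ R Q)).compr₂ (inrP R Q))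
    + (((Ω.r.compl₁₂ (LinearMap.fst ℂ R Q) (LinearMap.snd ℂ R Q)).compr₂
        (inrP R Q ∘ₗ evA1 (nD dQ))).flip)

lemma uprod_apply (dR : R →ₗ[ℂ] R) (dQ : Q →ₗ[ℂ] Q) (Ω : ExtDatum dR dQ)
    (m : R →ₗ[ℂ] R →ₗ[ℂ] OP R) (e₁ e₂ : R × Q) :
    uprod dR dQ Ω m e₁ e₂ =
      inlP R Q (m e₁.1 e₂.1 + Ω.phi e₁.2 e₂.1 + evA1 (nD dR) (Ω.psi e₂.2 e₁.1) + Ω.g e₁.2 e₂.2)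
      + inrP R Q (Ω.o e₁.2 e₂.2 + Ω.l e₁.1 e₂.2 + evA1 (nD dQ) (Ω.r e₂.1 e₁.2)) := by
  simp [uprod, LinearMap.add_apply, LinearMap.compr₂_apply, LinearMap.compl₁₂_apply,
    LinearMap.flip_apply, map_add, LinearMap.comp_apply]
  abel

lemma uprod_res (dR : R →ₗ[ℂ] R) (dQ : Q →ₗ[ℂ] Q) (Ω : ExtDatum dR dQ)
    (m : R →ₗ[ℂ] R →ₗ[ℂ] OP R) (a b : R) :
    uprod dR dQ Ω m (a, (0 : Q)) (b, 0) = inlP R Q (m a b) := by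
  rw [uprod_apply]
  simp

/-- Isomorphism property of left-symmetric conformal algebra structures, via
a ℂ[∂]-module automorphism `T` of the underlying module `E`. -/
structure IsIsoLSCA {E : Type*} [AddCommGroup E] [Module ℂ E] (dE : E →ₗ[ℂ] E)
    (m₁ m₂ : E →ₗ[ℂ] E →ₗ[ℂ] OP E) (T : E ≃ₗ[ℂ] E) : Prop where
  dcomm : ∀ e, T (dE e) = dE (T e)
  mult : ∀ u v, m₂ (T u) (T v) = pMap (T : E →ₗ[ℂ] E) (m₁ u v)

/-- `T` stabilizes `R`, i.e. `T ∘ i = i` for the inclusion `i : R → R ⊕ Q`. -/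
def Stab (T : (R × Q) ≃ₗ[ℂ] (R × Q)) : Prop := ∀ a : R, T (a, 0) = (a, 0)

/-- `T` co-stabilizes `Q`, i.e. `π ∘ T = π` for the projection `π : R ⊕ Q → Q`. -/
def Costab (T : (R × Q) ≃ₗ[ℂ] (R × Q)) : Prop := ∀ e, (T e).2 = e.2

end Ext

/-!
Writing `E = R ⊕ Q`, the λ-product of `E` splits into its components on the four blocks
`R × R`, `R × Q`, `Q × R`, `Q × Q`, each projected to `R` and to `Q`. Reading `φ, l` off
`Q × R` and `R × Q` directly, and `ψ, r` after the substitution `λ ↦ −λ−∂` (an involution),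
these components form an extending datum whose unified product is literally the λ-product
of `E`; since `R` and `Q` are subalgebras, its `R × R` part is the product of `R`, its `g`
vanishes and its `∘` is the product of `Q`. The identity of `R ⊕ Q` is then the required
isomorphism.
-/

section Polynomial

variable {U W : Type*} [AddCommGroup U] [Module ℂ U] [AddCommGroup W] [Module ℂ W]

lemma lsh_single (k : ℕ) (w : W) : lsh (Finsupp.single k w) = Finsupp.single (k + 1) w := by
  simp [lsh, Finsupp.mapDomain_single]

lemma lsh_pow_single_zero (k : ℕ) (w : W) :
    (lsh ^ k) (Finsupp.single 0 w) = Finsupp.single k w := by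
  induction k with
  | zero => simp
  | succ n ih => rw [pow_succ', Module.End.mul_apply, ih, lsh_single]

lemma pD_single (d : W →ₗ[ℂ] W) (k : ℕ) (w : W) :
    pD d (Finsupp.single k w) = Finsupp.single k (d w) := by
  simp [pD]

lemma pD_lsh (d : W →ₗ[ℂ] W) (p : OP W) : pD d (lsh p) = lsh (pD d p) := by
  induction p using Finsupp.induction_linear with
  | zero => simp
  | add f g hf hg => simp only [map_add, hf, hg]
  | single k w => rw [lsh_single, pD_single, pD_single, lsh_single]

lemma nD_pD (d : W →ₗ[ℂ] W) (p : OP W) : nD d (pD d p) = pD d (nD d p) := by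
  simp only [nD, LinearMap.sub_apply, LinearMap.neg_apply, map_sub, map_neg, pD_lsh]

lemma evA1_single (A : OP W →ₗ[ℂ] OP W) (k : ℕ) (w : W) :
    evA1 A (Finsupp.single k w) = (A ^ k) (Finsupp.single 0 w) := by
  simp [evA1]

lemma evA1_lsh (A : OP W →ₗ[ℂ] OP W) (p : OP W) : evA1 A (lsh p) = A (evA1 A p) := by
  induction p using Finsupp.induction_linear with
  | zero => simp
  | add f g hf hg => simp only [map_add, hf, hg]
  | single k w => rw [lsh_single, evA1_single, evA1_single, pow_succ', Module.End.mul_apply]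

lemma evA1_pD (d : W →ₗ[ℂ] W) (A : OP W →ₗ[ℂ] OP W)
    (hA : ∀ p, A (pD d p) = pD d (A p)) (p : OP W) :
    evA1 A (pD d p) = pD d (evA1 A p) := by
  induction p using Finsupp.induction_linear with
  | zero => simp
  | add f g hf hg => simp only [map_add, hf, hg]
  | single k w =>
    rw [pD_single, evA1_single, evA1_single]
    induction k with
    | zero => simp [pD_single]
    | succ n ih =>
      simp only [pow_succ', Module.End.mul_apply]
      rw [ih, hA]

lemma evA1_nD_nD (d : W →ₗ[ℂ] W) (p : OP W) :
    evA1 (nD d) (nD d p) = lsh (evA1 (nD d) p) := by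
  have hnD : nD d p = -lsh p - pD d p := rfl
  rw [hnD, map_sub, map_neg, evA1_lsh, evA1_pD d _ (nD_pD d)]
  simp only [nD, LinearMap.sub_apply, LinearMap.neg_apply]
  abel

lemma evA1_nD_involutive (d : W →ₗ[ℂ] W) : Function.Involutive (evA1 (nD d)) := by
  intro p
  induction p using Finsupp.induction_linear with
  | zero => simp
  | add f g hf hg => simp only [map_add, hf, hg]
  | single k w =>
    have hpow : ∀ n : ℕ, evA1 (nD d) ((nD d ^ n) (Finsupp.single 0 w))
        = (lsh ^ n) (Finsupp.single 0 w) := by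
      intro n
      induction n with
      | zero => simp [evA1_single]
      | succ n ih =>
        simp only [pow_succ', Module.End.mul_apply]
        rw [evA1_nD_nD, ih]
    rw [evA1_single, hpow, lsh_pow_single_zero]

lemma evA1_nD_neg_lsh (d : W →ₗ[ℂ] W) (p : OP W) :
    evA1 (nD d) (-lsh p) = lsh (evA1 (nD d) p) + pD d (evA1 (nD d) p) := by
  rw [map_neg, evA1_lsh]
  simp only [nD, LinearMap.sub_apply, LinearMap.neg_apply]
  abel

lemma evA1_nD_lsh_add_pD (d : W →ₗ[ℂ] W) (p : OP W) :
    evA1 (nD d) (lsh p + pD d p) = -lsh (evA1 (nD d) p) := by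
  rw [map_add, evA1_lsh, evA1_pD d _ (nD_pD d)]
  simp only [nD, LinearMap.sub_apply, LinearMap.neg_apply]
  abel

lemma pMap_lsh (f : U →ₗ[ℂ] W) (p : OP U) : pMap f (lsh p) = lsh (pMap f p) := by
  induction p using Finsupp.induction_linear with
  | zero => simp
  | add a b ha hb => simp only [map_add, ha, hb]
  | single k u => simp [pMap, lsh_single]

lemma pMap_pD {dU : U →ₗ[ℂ] U} {dW : W →ₗ[ℂ] W} {f : U →ₗ[ℂ] W}
    (hf : ∀ u, f (dU u) = dW (f u)) (p : OP U) :
    pMap f (pD dU p) = pD dW (pMap f p) := by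
  ext k
  simp [pMap, pD, hf]

end Polynomial

section Conformal

variable {A B C E U V W : Type*}
  [AddCommGroup A] [Module ℂ A] [AddCommGroup B] [Module ℂ B] [AddCommGroup C] [Module ℂ C]
  [AddCommGroup E] [Module ℂ E] [AddCommGroup U] [Module ℂ U] [AddCommGroup V] [Module ℂ V]
  [AddCommGroup W] [Module ℂ W]

lemma ConfBilin.compl₁₂_compr₂ {dA : A →ₗ[ℂ] A} {dB : B →ₗ[ℂ] B} {dC : C →ₗ[ℂ] C}
    {dE : E →ₗ[ℂ] E} {mE : E →ₗ[ℂ] E →ₗ[ℂ] OP E} (hmE : ConfBilin dE dE dE mE)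
    {f : A →ₗ[ℂ] E} {g : B →ₗ[ℂ] E} {p : E →ₗ[ℂ] C}
    (hf : ∀ a, f (dA a) = dE (f a)) (hg : ∀ b, g (dB b) = dE (g b))
    (hp : ∀ e, p (dE e) = dC (p e)) :
    ConfBilin dA dB dC ((mE.compl₁₂ f g).compr₂ (pMap p)) where
  dleft a b := by simp only [LinearMap.compr₂_apply, LinearMap.compl₁₂_apply, hf, hmE.dleft,
    map_neg, pMap_lsh]
  dright a b := by simp only [LinearMap.compr₂_apply, LinearMap.compl₁₂_apply, hg,
    hmE.dright, map_add, pMap_lsh, pMap_pD hp]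

/-- The opposite pairing `(v, u) ↦ u_{−λ−∂} v`. -/
lemma ConfBilin.flip_evA1_nD {dU : U →ₗ[ℂ] U} {dV : V →ₗ[ℂ] V} {dW : W →ₗ[ℂ] W}
    {m : U →ₗ[ℂ] V →ₗ[ℂ] OP W} (hm : ConfBilin dU dV dW m) :
    ConfBilin dV dU dW (m.compr₂ (evA1 (nD dW))).flip where
  dleft v u := by
    simp only [LinearMap.flip_apply, LinearMap.compr₂_apply, hm.dright, evA1_nD_lsh_add_pD]
  dright v u := by
    simp only [LinearMap.flip_apply, LinearMap.compr₂_apply, hm.dleft, evA1_nD_neg_lsh]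

end Conformal

section Split

variable {R Q : Type*} [AddCommGroup R] [Module ℂ R] [AddCommGroup Q] [Module ℂ Q]

@[simp]
lemma pMap_fst_inrP (p : OP Q) : pMap (LinearMap.fst ℂ R Q) (inrP R Q p) = 0 := by
  ext k; simp [pMap, inrP]

@[simp]
lemma pMap_snd_inrP (p : OP Q) : pMap (LinearMap.snd ℂ R Q) (inrP R Q p) = p := by
  ext k; simp [pMap, inrP]

lemma inlP_fst_add_inrP_snd (p : OP (R × Q)) :
    inlP R Q (pMap (LinearMap.fst ℂ R Q) p) + inrP R Q (pMap (LinearMap.snd ℂ R Q) p) = p := by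
  ext k <;> simp [pMap, inlP, inrP]

def ExtDatum.ofProd (dR : R →ₗ[ℂ] R) (dQ : Q →ₗ[ℂ] Q)
    (mE : (R × Q) →ₗ[ℂ] (R × Q) →ₗ[ℂ] OP (R × Q))
    (hmE : ConfBilin (dR.prodMap dQ) (dR.prodMap dQ) (dR.prodMap dQ) mE) :
    ExtDatum dR dQ where
  phi := (mE.compl₁₂ (LinearMap.inr ℂ R Q) (LinearMap.inl ℂ R Q)).compr₂
    (pMap (LinearMap.fst ℂ R Q))
  psi := (((mE.compl₁₂ (LinearMap.inl ℂ R Q) (LinearMap.inr ℂ R Q)).compr₂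
    (pMap (LinearMap.fst ℂ R Q))).compr₂ (evA1 (nD dR))).flip
  l := (mE.compl₁₂ (LinearMap.inl ℂ R Q) (LinearMap.inr ℂ R Q)).compr₂
    (pMap (LinearMap.snd ℂ R Q))
  r := (((mE.compl₁₂ (LinearMap.inr ℂ R Q) (LinearMap.inl ℂ R Q)).compr₂
    (pMap (LinearMap.snd ℂ R Q))).compr₂ (evA1 (nD dQ))).flip
  g := (mE.compl₁₂ (LinearMap.inr ℂ R Q) (LinearMap.inr ℂ R Q)).compr₂
    (pMap (LinearMap.fst ℂ R Q))
  o := (mE.compl₁₂ (LinearMap.inr ℂ R Q) (LinearMap.inr ℂ R Q)).compr₂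
    (pMap (LinearMap.snd ℂ R Q))
  hphi := hmE.compl₁₂_compr₂ (by simp) (by simp) (by simp)
  hpsi := (hmE.compl₁₂_compr₂ (by simp) (by simp) (by simp)).flip_evA1_nD
  hl := hmE.compl₁₂_compr₂ (by simp) (by simp) (by simp)
  hr := (hmE.compl₁₂_compr₂ (by simp) (by simp) (by simp)).flip_evA1_nD
  hg := hmE.compl₁₂_compr₂ (by simp) (by simp) (by simp)
  ho := hmE.compl₁₂_compr₂ (by simp) (by simp) (by simp)

lemma uprod_ofProd (dR : R →ₗ[ℂ] R) (dQ : Q →ₗ[ℂ] Q) (m : R →ₗ[ℂ] R →ₗ[ℂ] OP R)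
    (mE : (R × Q) →ₗ[ℂ] (R × Q) →ₗ[ℂ] OP (R × Q))
    (hmE : ConfBilin (dR.prodMap dQ) (dR.prodMap dQ) (dR.prodMap dQ) mE)
    (hsubR : ∀ a b : R, mE (a, 0) (b, 0) = inlP R Q (m a b)) :
    uprod dR dQ (ExtDatum.ofProd dR dQ mE hmE) m = mE := by
  refine LinearMap.ext fun e₁ => LinearMap.ext fun e₂ => ?_
  obtain ⟨a, x⟩ := e₁
  obtain ⟨b, y⟩ := e₂
  have hsplit : mE (a, x) (b, y) = mE (a, 0) (b, 0) + mE (a, 0) (0, y)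
      + mE (0, x) (b, 0) + mE (0, x) (0, y) := by
    rw [show ((a, x) : R × Q) = (a, 0) + (0, x) by simp,
      show ((b, y) : R × Q) = (b, 0) + (0, y) by simp]
    simp only [map_add, LinearMap.add_apply]
    abel
  rw [uprod_apply, hsplit, hsubR, ← inlP_fst_add_inrP_snd (mE (a, 0) (0, y)),
    ← inlP_fst_add_inrP_snd (mE (0, x) (b, 0)), ← inlP_fst_add_inrP_snd (mE (0, x) (0, y))]
  simp only [ExtDatum.ofProd, LinearMap.flip_apply, LinearMap.compr₂_apply,
    LinearMap.compl₁₂_apply, LinearMap.inl_apply, LinearMap.inr_apply,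
    evA1_nD_involutive _ _, map_add]
  abel

end Split

lemma IsIsoLSCA.refl {E : Type*} [AddCommGroup E] [Module ℂ E] (dE : E →ₗ[ℂ] E)
    (m : E →ₗ[ℂ] E →ₗ[ℂ] OP E) : IsIsoLSCA dE m m (LinearEquiv.refl ℂ E) where
  dcomm _ := rfl
  mult u v := by ext k; simp [pMap]

theorem E_iso_bicrossed_product_general
    {R Q : Type*} [AddCommGroup R] [Module ℂ R] [AddCommGroup Q] [Module ℂ Q]
    (dR : R →ₗ[ℂ] R) (dQ : Q →ₗ[ℂ] Q)
    (m : R →ₗ[ℂ] R →ₗ[ℂ] OP R)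
    (mQ : Q →ₗ[ℂ] Q →ₗ[ℂ] OP Q)
    (mE : (R × Q) →ₗ[ℂ] (R × Q) →ₗ[ℂ] OP (R × Q))
    (hE : IsLSCA (dR.prodMap dQ) mE)
    (hsubR : ∀ a b : R, mE (a, 0) (b, 0) = inlP R Q (m a b))
    (hsubQ : ∀ x y : Q, mE (0, x) (0, y) = inrP R Q (mQ x y)) :
    ∃ Ω : ExtDatum dR dQ, Ω.g = 0 ∧ Ω.o = mQ ∧
      IsLSCA (dR.prodMap dQ) (uprod dR dQ Ω m) ∧
      ∃ T : (R × Q) ≃ₗ[ℂ] (R × Q),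
        IsIsoLSCA (dR.prodMap dQ) mE (uprod dR dQ Ω m) T ∧ Stab T ∧ Costab T := by
  have hΩ := uprod_ofProd dR dQ m mE hE.conf hsubR
  refine ⟨ExtDatum.ofProd dR dQ mE hE.conf, ?_, ?_, by rw [hΩ]; exact hE,
    LinearEquiv.refl ℂ (R × Q), by rw [hΩ]; exact IsIsoLSCA.refl _ mE, fun _ => rfl, fun _ => rfl⟩
  · ext x y : 2
    simp [ExtDatum.ofProd, hsubQ]
  · ext x y : 2
    simp [ExtDatum.ofProd, hsubQ]

/-- **Proposition 5.4.**  Let `R` and `Q` be two left-symmetric conformal algebras, and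
`E = R ⊕ Q` a left-symmetric conformal algebra containing both `R` and `Q` as subalgebras.
Then `E` is isomorphic to a bicrossed product `R ⋈^{φ,ψ}_{l,r} Q` (a unified product with
`g` trivial and `∘` the λ-product of `Q`), by an isomorphism stabilizing `R` and
co-stabilizing `Q`. -/
theorem E_iso_bicrossed_product
    {R Q : Type*} [AddCommGroup R] [Module ℂ R] [AddCommGroup Q] [Module ℂ Q]
    (dR : R →ₗ[ℂ] R) (dQ : Q →ₗ[ℂ] Q)
    (m : R →ₗ[ℂ] R →ₗ[ℂ] OP R) (hm : IsLSCA dR m)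
    (mQ : Q →ₗ[ℂ] Q →ₗ[ℂ] OP Q) (hmQ : IsLSCA dQ mQ)
    (mE : (R × Q) →ₗ[ℂ] (R × Q) →ₗ[ℂ] OP (R × Q))
    (hE : IsLSCA (dR.prodMap dQ) mE)
    (hsubR : ∀ a b : R, mE (a, 0) (b, 0) = inlP R Q (m a b))
    (hsubQ : ∀ x y : Q, mE (0, x) (0, y) = inrP R Q (mQ x y)) :
    ∃ Ω : ExtDatum dR dQ, Ω.g = 0 ∧ Ω.o = mQ ∧
      IsLSCA (dR.prodMap dQ) (uprod dR dQ Ω m) ∧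
      ∃ T : (R × Q) ≃ₗ[ℂ] (R × Q),
        IsIsoLSCA (dR.prodMap dQ) mE (uprod dR dQ Ω m) T ∧ Stab T ∧ Costab T :=
  E_iso_bicrossed_product_general dR dQ m mQ mE hE hsubR hsubQ
end
end

section
/- Let c ∈ ℂ and let R = ℂ[∂]L be the left-symmetric conformal algebra which is free of rank one as a ℂ[∂]-module, with λ-product determined by L_λ L = (λ + ∂ + c)L. Then every conformal derivation of R is zero: if D_λ : R → R[λ] is a conformal linear map satisfying D_λ(a_μ b) = D_λ(a)_{λ+μ} b + a_μ(D_λ(b)) for all a, b ∈ R, then D = 0. -/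
open Finsupp Polynomial

noncomputable section

/-- ∂ on ℂ[∂] = `Polynomial ℂ`: multiplication by `X`. -/
def dC : Polynomial ℂ →ₗ[ℂ] Polynomial ℂ := LinearMap.mulLeft ℂ (Polynomial.X : Polynomial ℂ)

/-! Evaluating the derivation identity for `a = b = L` at `λ ↦ t`, `μ ↦ u`, `∂ ↦ s` in a
commutative `ℂ`-algebra gives
`(u + t + s + c) E(s) = (t + u + s + c) E(-(t + u)) + (u + s + c) E(u + s)`,
where `E(x)` is `D_λ L` evaluated at `λ ↦ t`, `∂ ↦ x`. In `ℂ[∂][λ]`, with `t = λ` and `s = ∂`,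
the substitution `u = -λ - ∂` leaves `(c - λ) E(-λ) = 0`, and then `u = 0` leaves `λ E(∂) = 0`.
Hence `D_λ L = 0`, and `D` vanishes because conformal linearity determines it from `D_λ L`. -/

lemma Polynomial.linearMap_apply_eq_aeval_mul {R T : Type*} [CommSemiring R] [CommSemiring T]
    [Algebra R T] (φ : R[X] →ₗ[R] T) (s : T) (h : ∀ q, φ (X * q) = s * φ q) (P : R[X]) :
    φ P = aeval s P * φ 1 := by
  induction P using Polynomial.induction_on with
  | C a => rw [← mul_one (C a), ← smul_eq_C_mul, map_smul, map_smul, aeval_one,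
      Algebra.smul_def, Algebra.smul_def, mul_one]
  | add p q hp hq => rw [map_add, map_add, hp, hq, add_mul]
  | monomial n a ih =>
    rw [pow_succ', mul_left_comm, h, ih, map_mul, map_mul, map_mul, aeval_X]
    ring

lemma LinearMap.map_pow_apply_of_map_apply_eq_mul {R M T : Type*} [CommSemiring R]
    [AddCommMonoid M] [Module R M] [Semiring T] [Module R T] (φ : M →ₗ[R] T)
    (A : Module.End R M) (a : T) (h : ∀ p, φ (A p) = a * φ p) (k : ℕ) (p : M) :
    φ ((A ^ k) p) = a ^ k * φ p := by
  induction k with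
  | zero => simp
  | succ k ih => rw [pow_succ', Module.End.mul_apply, h, ih, pow_succ', mul_assoc]

lemma dC_apply (q : ℂ[X]) : dC q = X * q := rfl

section Extensions

variable {U V W : Type*} [AddCommGroup U] [Module ℂ U] [AddCommGroup V] [Module ℂ V]
  [AddCommGroup W] [Module ℂ W]

lemma exL_eq_exU (m : U →ₗ[ℂ] V →ₗ[ℂ] OP W) (A : Module.End ℂ (TP W))
    (p : TP U) (b : V) : exL m A p b = exU (m.flip b) A p := rfl

lemma exR_eq_exU (m : U →ₗ[ℂ] V →ₗ[ℂ] OP W) (A : Module.End ℂ (TP W))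
    (a : U) (p : TP V) : exR m A a p = exU (m a) A p := rfl

end Extensions

section Evaluation

variable {T : Type*} [CommRing T] [Algebra ℂ T]

/-- Substitution `λ ↦ t`, `∂ ↦ s`. -/
def evalOP (t s : T) : OP ℂ[X] →ₗ[ℂ] T :=
  Finsupp.lsum ℂ fun k => LinearMap.mulLeft ℂ (t ^ k) ∘ₗ (aeval s).toLinearMap

/-- Substitution `λ ↦ t`, `μ ↦ u`, `∂ ↦ s`. -/
def evalTP (t u s : T) : TP ℂ[X] →ₗ[ℂ] T :=
  Finsupp.lsum ℂ fun ij => LinearMap.mulLeft ℂ (t ^ ij.1 * u ^ ij.2) ∘ₗ (aeval s).toLinearMap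

@[simp]
lemma evalOP_single (t s : T) (k : ℕ) (P : ℂ[X]) :
    evalOP t s (single k P) = t ^ k * aeval s P := by
  simp [evalOP]

@[simp]
lemma evalTP_single (t u s : T) (i j : ℕ) (P : ℂ[X]) :
    evalTP t u s (single (i, j) P) = t ^ i * u ^ j * aeval s P := by
  simp [evalTP, mul_assoc]

lemma evalTP_apply (t u s : T) (p : TP ℂ[X]) :
    evalTP t u s p = p.sum fun ij P => t ^ ij.1 * u ^ ij.2 * aeval s P := by
  rw [evalTP, Finsupp.lsum_apply]
  refine Finsupp.sum_congr fun ij _ => ?_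
  simp [mul_assoc]

lemma evalOP_lsh (t s : T) (g : OP ℂ[X]) : evalOP t s (lsh g) = t * evalOP t s g := by
  induction g using Finsupp.induction_linear with
  | zero => simp
  | add f g hf hg => simp only [map_add, hf, hg, mul_add]
  | single k P => simp [lsh, pow_succ, mul_assoc, mul_left_comm]

lemma evalOP_pD_dC (t s : T) (g : OP ℂ[X]) : evalOP t s (pD dC g) = s * evalOP t s g := by
  induction g using Finsupp.induction_linear with
  | zero => simp
  | add f g hf hg => simp only [map_add, hf, hg, mul_add]
  | single k P =>
    rw [pD, Finsupp.mapRange.linearMap_apply, Finsupp.mapRange_single, evalOP_single,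
      evalOP_single, dC_apply, map_mul, aeval_X, mul_left_comm]

lemma evalTP_LX (t u s : T) (p : TP ℂ[X]) : evalTP t u s (LX p) = t * evalTP t u s p := by
  induction p using Finsupp.induction_linear with
  | zero => simp
  | add f g hf hg => simp only [map_add, hf, hg, mul_add]
  | single ij P =>
    obtain ⟨i, j⟩ := ij
    simp [LX, pow_succ, mul_assoc, mul_left_comm]

lemma evalTP_LY (t u s : T) (p : TP ℂ[X]) : evalTP t u s (LY p) = u * evalTP t u s p := by
  induction p using Finsupp.induction_linear with
  | zero => simp
  | add f g hf hg => simp only [map_add, hf, hg, mul_add]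
  | single ij P =>
    obtain ⟨i, j⟩ := ij
    simp [LY, pow_succ, mul_assoc, mul_left_comm]

lemma evalTP_evA {A : Module.End ℂ (TP ℂ[X])} {t u s a : T}
    (hA : ∀ p, evalTP t u s (A p) = a * evalTP t u s p) (g : OP ℂ[X]) :
    evalTP t u s (evA A g) = evalOP a s g := by
  induction g using Finsupp.induction_linear with
  | zero => simp
  | add f g hf hg => simp only [map_add, hf, hg]
  | single k P =>
    simp [evA, LinearMap.map_pow_apply_of_map_apply_eq_mul _ A a hA]

lemma evalTP_exU_eq_mul {D : ℂ[X] →ₗ[ℂ] OP ℂ[X]} {A : Module.End ℂ (TP ℂ[X])} {t u s a r : T}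
    (hD : ∀ q, evalOP a s (D (X * q)) = r * evalOP a s (D q))
    (hA : ∀ p, evalTP t u s (A p) = a * evalTP t u s p) (p : TP ℂ[X]) :
    evalTP t u s (exU D A p) = evalTP t u r p * evalOP a s (D 1) := by
  have hDP := Polynomial.linearMap_apply_eq_aeval_mul (evalOP a s ∘ₗ D) r hD
  rw [exU, map_finsuppSum, evalTP_apply t u r, Finsupp.sum_mul]
  refine Finsupp.sum_congr fun ij _ => ?_
  rw [LinearMap.map_pow_apply_of_map_apply_eq_mul _ _ t (evalTP_LX t u s),
    LinearMap.map_pow_apply_of_map_apply_eq_mul _ _ u (evalTP_LY t u s), evalTP_evA hA,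
    ← LinearMap.comp_apply (evalOP a s) D, hDP, LinearMap.comp_apply]
  ring

lemma evalOP_map_X_mul_of_conformal {D : ℂ[X] →ₗ[ℂ] OP ℂ[X]}
    (hD : ∀ q, D (dC q) = lsh (D q) + pD dC (D q)) (a s : T) (q : ℂ[X]) :
    evalOP a s (D (X * q)) = (a + s) * evalOP a s (D q) := by
  rw [← dC_apply, hD, map_add, evalOP_lsh, evalOP_pD_dC, add_mul]

lemma ConfBilin.evalOP_map_X_mul_left {m : ℂ[X] →ₗ[ℂ] ℂ[X] →ₗ[ℂ] OP ℂ[X]}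
    (hm : ConfBilin dC dC dC m) (a s : T) (b q : ℂ[X]) :
    evalOP a s (m (X * q) b) = -a * evalOP a s (m q b) := by
  rw [← dC_apply, hm.dleft, map_neg, evalOP_lsh, neg_mul]

lemma evalOP_derivation_identity {m : ℂ[X] →ₗ[ℂ] ℂ[X] →ₗ[ℂ] OP ℂ[X]}
    (hm : ConfBilin dC dC dC m) {D : ℂ[X] →ₗ[ℂ] OP ℂ[X]}
    (hconf : ∀ a, D (dC a) = lsh (D a) + pD dC (D a))
    (hder : exU D LX (ev2 m LY 1 1)
      = exL m (LX + LY) (evA LX (D 1)) 1 + exR m LY 1 (evA LX (D 1))) (t u s : T) :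
    evalOP u (t + s) (m 1 1) * evalOP t s (D 1)
      = evalOP t (-(t + u)) (D 1) * evalOP (t + u) s (m 1 1)
        + evalOP t (u + s) (D 1) * evalOP u s (m 1 1) := by
  have hLXLY : ∀ p, evalTP t u s ((LX + LY : Module.End ℂ (TP ℂ[X])) p)
      = (t + u) * evalTP t u s p := fun p => by
    rw [LinearMap.add_apply, map_add, evalTP_LX, evalTP_LY, add_mul]
  have h := congrArg (evalTP t u s) hder
  rwa [map_add, ev2, exL_eq_exU, exR_eq_exU,
    evalTP_exU_eq_mul (evalOP_map_X_mul_of_conformal hconf t s) (evalTP_LX t u s),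
    evalTP_exU_eq_mul (hm.evalOP_map_X_mul_left (t + u) s 1) hLXLY,
    evalTP_exU_eq_mul (evalOP_map_X_mul_of_conformal (hm.dright 1) u s) (evalTP_LY t u s),
    evalTP_evA (evalTP_LY t u _), evalTP_evA (evalTP_LX t u _),
    evalTP_evA (evalTP_LX t u _)] at h

lemma evalOP_single_one_add_single_zero (a s : T) (c : ℂ) :
    evalOP a s (single 1 1 + single 0 (X + C c)) = a + s + algebraMap ℂ T c := by
  simp only [map_add, evalOP_single, aeval_X, aeval_C, map_one]
  ring

end Evaluation

lemma coeff_evalOP_X_C_X (f : OP ℂ[X]) (n : ℕ) :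
    (evalOP (X : ℂ[X][X]) (C X) f).coeff n = f n := by
  induction f using Finsupp.induction_linear with
  | zero => simp
  | add f g hf hg => rw [map_add, coeff_add, hf, hg, Finsupp.add_apply]
  | single k P =>
    rw [evalOP_single, ← CAlgHom_apply (R := ℂ), aeval_algHom_apply, aeval_X_left_apply,
      CAlgHom_apply, X_pow_mul, C_mul_X_pow_eq_monomial, coeff_monomial, Finsupp.single_apply]

lemma eq_zero_of_evalOP_identity (k : ℂ[X]) (f : OP ℂ[X])
    (h : ∀ u : ℂ[X][X], (u + (X + C X) + C k) * evalOP (X : ℂ[X][X]) (C X) f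
      = evalOP X (-(X + u)) f * (X + u + C X + C k) + evalOP X (u + C X) f * (u + C X + C k)) :
    f = 0 := by
  have hG : evalOP (X : ℂ[X][X]) (-X) f = 0 := by
    have hu := h (-(X + C (X : ℂ[X])))
    rw [show (-(X + -(X + C (X : ℂ[X]))) : ℂ[X][X]) = C X by ring,
      show (-(X + C (X : ℂ[X])) + C X : ℂ[X][X]) = -X by ring] at hu
    have hmul : (X - C k) * evalOP (X : ℂ[X][X]) (-X) f = 0 := by linear_combination hu
    exact (mul_eq_zero.mp hmul).resolve_left (X_sub_C_ne_zero k)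
  have hE : X * evalOP (X : ℂ[X][X]) (C X) f = 0 := by
    have hu := h 0
    simp only [add_zero, zero_add, hG, zero_mul] at hu
    linear_combination hu
  ext n
  rw [← coeff_evalOP_X_C_X, (mul_eq_zero.mp hE).resolve_left X_ne_zero, coeff_zero,
    Finsupp.coe_zero, Pi.zero_apply]

lemma eq_zero_of_conformal_of_map_one {D : ℂ[X] →ₗ[ℂ] OP ℂ[X]}
    (hD : ∀ q, D (dC q) = lsh (D q) + pD dC (D q)) (h1 : D 1 = 0) : D = 0 := by
  refine LinearMap.ext fun P => ?_
  rw [LinearMap.zero_apply]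
  induction P using Polynomial.induction_on with
  | C a => rw [← mul_one (C a), ← smul_eq_C_mul, map_smul, h1, smul_zero]
  | add p q hp hq => rw [map_add, hp, hq, add_zero]
  | monomial n a ih =>
    rw [pow_succ', mul_left_comm, ← dC_apply, hD, ih,
      map_zero, map_zero, add_zero]

/-- `R = ℂ[∂]L` is realised as `ℂ[X]` with `L = 1`, so `m 1 1` encodes `λ + ∂ + c`. -/
theorem conformal_derivations_vanish (c : ℂ)
    (m : Polynomial ℂ →ₗ[ℂ] Polynomial ℂ →ₗ[ℂ] OP (Polynomial ℂ))
    (hm : IsLSCA dC m)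
    (hprod : m 1 1 =
      Finsupp.single 1 (1 : Polynomial ℂ) + Finsupp.single 0 (Polynomial.X + Polynomial.C c))
    (D : Polynomial ℂ →ₗ[ℂ] OP (Polynomial ℂ))
    -- `D` is a conformal linear map: `D_λ(∂a) = (∂+λ) D_λ(a)`
    (hconf : ∀ a, D (dC a) = lsh (D a) + pD dC (D a))
    -- `D` is a conformal derivation: `D_λ(a_μ b) = D_λ(a)_{λ+μ} b + a_μ (D_λ(b))`
    (hder : ∀ a b, exU D LX (ev2 m LY a b)
      = exL m (LX + LY) (evA LX (D a)) b + exR m LY a (evA LX (D b))) :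
    D = 0 := by
  have key (u : ℂ[X][X]) := evalOP_derivation_identity hm.conf hconf (hder 1 1) X u (C X)
  simp only [hprod, evalOP_single_one_add_single_zero, Polynomial.algebraMap_apply,
    Algebra.algebraMap_self, RingHom.id_apply] at key
  exact eq_zero_of_conformal_of_map_one hconf (eq_zero_of_evalOP_identity (C c) (D 1) key)
end
end
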